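/- Let a > b > 0 and set p² = a² + b². Let x ∈ ℝ⁹ satisfy the constraints |α|² = a², |β|² = b², α·β = 0 together with the Bogoyavlensky relations ω₁² − ω₂² + α₁ − β₂ = 0 and 2ω₁ω₂ + α₂ + β₁ = 0 (equivalently K(x) = 0, defining the first critical subsystem 𝓜₁). Then 4·G(x) = 2p²·H(x) − F(x)², where F = (ω₁² + ω₂²)ω₃ + 2(α₃ω₁ + β₃ω₂) is the Bogoyavlensky partial integral. -/
import Mathlib


noncomputable section

/-- The energy integral `H = ω₁²+ω₂²+½ω₃²−α₁−β₂`. -/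
def kovH (x : Fin 9 → ℝ) : ℝ := (x 0)^2 + (x 1)^2 + (x 2)^2 / 2 - x 3 - x 7

/-- The integral `G` of the Kovalevskaya top in a double field. -/
def kovG (a b : ℝ) (x : Fin 9 → ℝ) : ℝ :=
  (x 0 * x 3 + x 1 * x 4 + x 5 * x 2 / 2)^2
  + (x 0 * x 6 + x 1 * x 7 + x 8 * x 2 / 2)^2
  + x 2 * ((x 4 * x 8 - x 5 * x 7) * x 0 + (x 5 * x 6 - x 3 * x 8) * x 1
      + (x 3 * x 7 - x 4 * x 6) * x 2 / 2)
  - x 3 * b^2 - x 7 * a^2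

/-- The Bogoyavlensky partial integral `F = (ω₁²+ω₂²)ω₃ + 2(α₃ω₁+β₃ω₂)`. -/
def kovF (x : Fin 9 → ℝ) : ℝ :=
  ((x 0)^2 + (x 1)^2) * x 2 + 2 * (x 5 * x 0 + x 8 * x 1)

/-- on the first critical subsystem `𝓜₁ = {K = 0}` inside `P⁶`,
one has `4G = 2p²H − F²` with `p² = a² + b²`. -/
theorem relation_on_M1 (a b : ℝ) (hb : 0 < b) (hab : b < a)
    (x : Fin 9 → ℝ)
    (h1 : (x 3)^2 + (x 4)^2 + (x 5)^2 = a^2)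
    (h2 : (x 6)^2 + (x 7)^2 + (x 8)^2 = b^2)
    (h3 : x 3 * x 6 + x 4 * x 7 + x 5 * x 8 = 0)
    (hZ1 : (x 0)^2 - (x 1)^2 + x 3 - x 7 = 0)
    (hZ2 : 2 * x 0 * x 1 + x 4 + x 6 = 0) :
    4 * kovG a b x = 2 * (a^2 + b^2) * kovH x - (kovF x)^2 := by
  unfold kovG kovH kovF
  linear_combination
    (4*(x 0)^2 + (x 2)^2) * h1
    + (4*(x 1)^2 + (x 2)^2) * h2
    + (8*(x 0)*(x 1)) * h3
    + (-(x 2)^2*(x 3) + 8*(x 0)*(x 1)*(x 4) - 8*(x 0)*(x 1)*(x 6) + (x 2)^2*(x 7)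
       + 4*(x 0)*(x 2)*(x 5) - 4*(x 1)*(x 2)*(x 8) + (x 0)^2*(x 2)^2 - (x 1)^2*(x 2)^2
       + 2*a^2 - 2*b^2) * hZ1
    + (-4*(x 0)^2*(x 4) + 4*(x 1)^2*(x 4) - (x 2)^2*(x 4) + 4*(x 0)^2*(x 6)
       - 4*(x 1)^2*(x 6) - (x 2)^2*(x 6) + 4*(x 1)*(x 2)*(x 5) + 4*(x 0)*(x 2)*(x 8)
       + 2*(x 0)*(x 1)*(x 2)^2) * hZ2
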